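/- The pivot stays in the anchor cone: if u and v are linearly independent and w_f > 0 and w_r > 0, then for every γ ∈ [0,1] there exist c₁, c₂ ≥ 0 such that g_γ = c₁·g_fid + c₂·g_eff. -/

import Mathlib

/-!
The fidelity anchor `g_fid` is orthogonal to `u`, and the efficacy anchor `g_eff` lies in the
plane spanned by `g_fid` and `u` with a positive `u`-component, since
`⟪g_eff, u⟫ = w_f ‖u - proj_v u‖² > 0` by linear independence. So in the orthonormal frame
`(ĝ_fid, û)` the unit vector along `g_eff` is `(cos φ, sin φ)` with `sin φ > 0`, and `g_γ` is the
unit vector at angle `γφ ∈ [0, φ]` in the same frame. The identity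
`sin φ • g_γ = sin (φ - γφ) • ĝ_fid + sin (γφ) • ĝ_eff` then exhibits the nonnegative coefficients.
-/

open Real InnerProductSpace InnerProductGeometry

section Pivot
variable {M : Type*} [AddCommGroup M] [Module ℝ M]

theorem sin_smul_cos_smul_add_sin_smul (x y : M) (φ θ : ℝ) :
    sin φ • (cos θ • x + sin θ • y) = sin (φ - θ) • x + sin θ • (cos φ • x + sin φ • y) := by
  rw [sin_sub]
  module

theorem exists_nonneg_cos_smul_add_sin_smul_eq (x y : M) {φ θ : ℝ} (hθ : 0 ≤ θ) (hθφ : θ ≤ φ)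
    (hφ : φ ≤ π) (hsin : 0 < sin φ) :
    ∃ c₁ c₂ : ℝ, 0 ≤ c₁ ∧ 0 ≤ c₂ ∧
      cos θ • x + sin θ • y = c₁ • x + c₂ • (cos φ • x + sin φ • y) := by
  refine ⟨sin (φ - θ) / sin φ, sin θ / sin φ,
    div_nonneg (sin_nonneg_of_nonneg_of_le_pi (by linarith) (by linarith)) hsin.le,
    div_nonneg (sin_nonneg_of_nonneg_of_le_pi hθ (by linarith)) hsin.le, ?_⟩
  apply smul_right_injective M hsin.ne'
  change sin φ • _ = sin φ • _
  rw [sin_smul_cos_smul_add_sin_smul, smul_add (sin φ), smul_smul, smul_smul,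
    mul_div_cancel₀ _ hsin.ne', mul_div_cancel₀ _ hsin.ne']

end Pivot

section InnerProduct
variable {E : Type*} [NormedAddCommGroup E] [InnerProductSpace ℝ E]

section Polar
variable {x y g : E} {a b : ℝ}

theorem norm_smul_add_smul_sq_of_inner_eq_zero (hxy : ⟪x, y⟫_ℝ = 0) :
    ‖a • x + b • y‖ ^ 2 = a ^ 2 * ‖x‖ ^ 2 + b ^ 2 * ‖y‖ ^ 2 := by
  rw [sq, norm_add_sq_eq_norm_sq_add_norm_sq_real
      (by simp [real_inner_smul_left, real_inner_smul_right, hxy]),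
    norm_smul, norm_smul, Real.norm_eq_abs, Real.norm_eq_abs]
  nlinarith [sq_abs a, sq_abs b]

theorem cos_angle_mul_norm_of_eq_smul_add_smul (hxy : ⟪x, y⟫_ℝ = 0) (hx : x ≠ 0)
    (hg : g = a • x + b • y) : cos (angle x g) * ‖g‖ = a * ‖x‖ := by
  apply mul_left_cancel₀ (norm_ne_zero_iff.mpr hx)
  rw [← mul_assoc, mul_comm ‖x‖, mul_assoc, cos_angle_mul_norm_mul_norm, hg, inner_add_right,
    real_inner_smul_right, real_inner_smul_right, hxy, real_inner_self_eq_norm_sq]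
  ring

theorem sin_angle_mul_norm_of_eq_smul_add_smul (hxy : ⟪x, y⟫_ℝ = 0) (hx : x ≠ 0) (hb : 0 ≤ b)
    (hg : g = a • x + b • y) : sin (angle x g) * ‖g‖ = b * ‖y‖ := by
  apply mul_left_cancel₀ (norm_ne_zero_iff.mpr hx)
  rw [← mul_assoc, mul_comm ‖x‖, mul_assoc, sin_angle_mul_norm_mul_norm,
    real_inner_self_eq_norm_sq, real_inner_self_eq_norm_sq, hg,
    norm_smul_add_smul_sq_of_inner_eq_zero hxy, inner_add_right, real_inner_smul_right,
    real_inner_smul_right, hxy, real_inner_self_eq_norm_sq,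
    ← Real.sqrt_sq (by positivity : 0 ≤ ‖x‖ * (b * ‖y‖))]
  congr 1
  ring

theorem sin_angle_pos_of_eq_smul_add_smul (hxy : ⟪x, y⟫_ℝ = 0) (hx : x ≠ 0) (hy : y ≠ 0)
    (hb : 0 < b) (hg : g = a • x + b • y) : 0 < sin (angle x g) := by
  have h := sin_angle_mul_norm_of_eq_smul_add_smul hxy hx hb.le hg
  exact pos_of_mul_pos_left (h ▸ mul_pos hb (norm_pos_iff.mpr hy)) (norm_nonneg g)

theorem inv_norm_smul_eq_cos_angle_smul_add_sin_angle_smul (hxy : ⟪x, y⟫_ℝ = 0) (hx : x ≠ 0)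
    (hy : y ≠ 0) (hb : 0 < b) (hg : g = a • x + b • y) :
    ‖g‖⁻¹ • g = cos (angle x g) • (‖x‖⁻¹ • x) + sin (angle x g) • (‖y‖⁻¹ • y) := by
  have hcos := cos_angle_mul_norm_of_eq_smul_add_smul hxy hx hg
  have hsin := sin_angle_mul_norm_of_eq_smul_add_smul hxy hx hb.le hg
  have hg0 : ‖g‖ ≠ 0 := by
    intro h
    rw [h, mul_zero] at hsin
    exact (mul_pos hb (norm_pos_iff.mpr hy)).ne hsin
  rw [eq_div_of_mul_eq hg0 hcos, eq_div_of_mul_eq hg0 hsin, hg]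
  match_scalars <;> field_simp

end Polar

section Rejection
variable (x y : E)

/-- The component of `y` orthogonal to `x`: `g_fid = rejection u t` and `g_eff = rejection v t`. -/
noncomputable def rejection : E := y - (⟪y, x⟫_ℝ / ‖x‖ ^ 2) • x

theorem inner_rejection_self : ⟪rejection x y, x⟫_ℝ = 0 := by
  rcases eq_or_ne x 0 with rfl | hx
  · exact inner_zero_right _
  rw [rejection, inner_sub_left, real_inner_smul_left, real_inner_self_eq_norm_sq]
  field_simp
  ring

theorem inner_rejection_right : ⟪rejection x y, y⟫_ℝ = ‖rejection x y‖ ^ 2 := by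
  have hy : y = rejection x y + (⟪y, x⟫_ℝ / ‖x‖ ^ 2) • x := (sub_add_cancel _ _).symm
  rw [congrArg (inner ℝ (rejection x y)) hy, inner_add_right, real_inner_smul_right,
    inner_rejection_self, mul_zero, add_zero, real_inner_self_eq_norm_sq]

theorem rejection_ne_zero {x y : E} (h : LinearIndependent ℝ ![x, y]) : rejection x y ≠ 0 := by
  intro h0
  have := LinearIndependent.pair_iff.mp h (-(⟪y, x⟫_ℝ / ‖x‖ ^ 2)) 1
    (by rw [← h0, rejection]; module)
  exact one_ne_zero this.2

theorem rejection_smul_add_smul {x : E} (hx : x ≠ 0) (a b : ℝ) :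
    rejection x (a • x + b • y) = b • rejection x y := by
  simp only [rejection, inner_add_left, real_inner_smul_left, real_inner_self_eq_norm_sq]
  match_scalars <;> field_simp
  ring

theorem rejection_swap :
    rejection y x = (1 - ⟪x, y⟫_ℝ / ‖y‖ ^ 2 * (⟪y, x⟫_ℝ / ‖x‖ ^ 2)) • x
      - (⟪x, y⟫_ℝ / ‖y‖ ^ 2) • rejection x y := by
  simp only [rejection]
  module

theorem exists_rejection_swap_eq {x y : E} (h : LinearIndependent ℝ ![x, y]) :
    ∃ a b : ℝ, 0 < b ∧ rejection y x = a • rejection x y + b • x := by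
  set b := 1 - ⟪x, y⟫_ℝ / ‖y‖ ^ 2 * (⟪y, x⟫_ℝ / ‖x‖ ^ 2)
  refine ⟨-(⟪x, y⟫_ℝ / ‖y‖ ^ 2), b, ?_, by rw [rejection_swap]; module⟩
  have hinner : ⟪rejection y x, x⟫_ℝ = b * ‖x‖ ^ 2 := by
    rw [rejection_swap, inner_sub_left, real_inner_smul_left, real_inner_smul_left,
      inner_rejection_self, real_inner_self_eq_norm_sq, mul_zero, sub_zero]
  have hpos : 0 < ⟪rejection y x, x⟫_ℝ := by
    rw [inner_rejection_right]
    exact pow_pos (norm_pos_iff.mpr (rejection_ne_zero (LinearIndependent.pair_symm_iff.mp h))) 2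
  exact pos_of_mul_pos_left (hinner ▸ hpos) (sq_nonneg _)

end Rejection

end InnerProduct

/-- The pivot stays in the anchor cone: for `γ ∈ [0,1]` there are nonnegative `c₁, c₂`
with `g_γ = c₁ • g_fid + c₂ • g_eff`. -/
theorem stmt_12 {E : Type*} [NormedAddCommGroup E] [InnerProductSpace ℝ E]
    (u v : E) (hu : u ≠ 0) (hv : v ≠ 0)
    (hind : LinearIndependent ℝ ![u, v])
    (wf wr : ℝ) (hwf : 0 < wf) (hwr : 0 < wr)
    (t : E) (ht : t = wf • u + wr • v)
    (geff : E) (hgeff : geff = t - (⟪t, v⟫_ℝ / ‖v‖ ^ 2) • v)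
    (gfid : E) (hgfid : gfid = t - (⟪t, u⟫_ℝ / ‖u‖ ^ 2) • u)
    (φ : ℝ) (hφ : φ = Real.arccos (⟪gfid, geff⟫_ℝ / (‖gfid‖ * ‖geff‖)))
    (γ : ℝ) (hγ : γ ∈ Set.Icc (0 : ℝ) 1) :
    ∃ c₁ c₂ : ℝ, 0 ≤ c₁ ∧ 0 ≤ c₂ ∧
      Real.cos (γ * φ) • (‖gfid‖⁻¹ • gfid) + Real.sin (γ * φ) • (‖u‖⁻¹ • u)
        = c₁ • gfid + c₂ • geff := by
  have hfid : gfid = wr • rejection u v := by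
    rw [hgfid, ht]
    exact rejection_smul_add_smul v hu wf wr
  have heff : geff = wf • rejection v u := by
    rw [hgeff, ht, add_comm]
    exact rejection_smul_add_smul u hv wr wf
  have horth : ⟪gfid, u⟫_ℝ = 0 := by
    rw [hfid, real_inner_smul_left, inner_rejection_self, mul_zero]
  have hfid0 : gfid ≠ 0 := hfid ▸ smul_ne_zero hwr.ne' (rejection_ne_zero hind)
  obtain ⟨a, b, hb, hswap⟩ := exists_rejection_swap_eq hind
  have hdecomp : geff = (wf * a / wr) • gfid + (wf * b) • u := by
    rw [heff, hswap, hfid]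
    match_scalars <;> field_simp
  have hbpos : 0 < wf * b := mul_pos hwf hb
  change φ = angle gfid geff at hφ
  have hsin : 0 < sin φ := hφ ▸ sin_angle_pos_of_eq_smul_add_smul horth hfid0 hu hbpos hdecomp
  have hunit : ‖geff‖⁻¹ • geff = cos φ • (‖gfid‖⁻¹ • gfid) + sin φ • (‖u‖⁻¹ • u) :=
    hφ ▸ inv_norm_smul_eq_cos_angle_smul_add_sin_angle_smul horth hfid0 hu hbpos hdecomp
  obtain ⟨hγ0, hγ1⟩ := hγ
  have hφ0 : 0 ≤ φ := hφ ▸ angle_nonneg _ _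
  obtain ⟨c₁, c₂, hc₁, hc₂, hc⟩ := exists_nonneg_cos_smul_add_sin_smul_eq
    (‖gfid‖⁻¹ • gfid) (‖u‖⁻¹ • u) (mul_nonneg hγ0 hφ0) (mul_le_of_le_one_left hφ0 hγ1)
    (hφ ▸ angle_le_pi _ _) hsin
  refine ⟨c₁ * ‖gfid‖⁻¹, c₂ * ‖geff‖⁻¹, by positivity, by positivity, ?_⟩
  rw [hc, ← hunit, smul_smul, smul_smul]
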